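/- Let p be prime, d ≥ 1, and R_{p²}^Kor = {x_{a,k} : 0 ≤ a,k ≤ p-1} ⊆ [0,1)^d (a multiset of p² points) with x_{a,k} = ({k/p}, {ak/p}, {a²k/p}, ..., {a^{d-1}k/p}). Then the squared periodic L₂-discrepancy of R_{p²}^Kor is at most d²/(2^d p²). -/

import Mathlib

open Complex
open scoped Classical

/-- `r(0) = 1` and `r(k) = 2π|k|/√6` for `k ≠ 0`. -/
noncomputable def rker (k : ℤ) : ℝ :=
  if k = 0 then 1 else 2 * Real.pi * |(k : ℝ)| / Real.sqrt 6

/-- The squared periodic `L₂`-discrepancy of the `N`-point (multi)set `X ⊆ [0,1)^d`, in its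
exponential-sum (diaphony) form. -/
noncomputable def periodicL2sq {ι : Type*} [Fintype ι] (d : ℕ) (X : ι → Fin d → ℝ) : ℝ :=
  (1 / 3^d) * ∑' k : Fin d → ℤ,
    if k ≠ 0 then
      (1 / (∏ j, rker (k j))^2) *
        (‖(1 / (Fintype.card ι : ℂ)) * ∑ n : ι,
          Complex.exp (2 * Real.pi * I * (∑ j, (k j : ℂ) * (X n j : ℂ)))‖)^2
    else 0

/-!
The exponential sum of the point set at a frequency `h` collapses, after summing over `k`, to
`p` times the number of roots in `𝔽_p` of `h₁ + h₂ X + ⋯ + h_d X^(d-1)`: it is `p²` when `p`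
divides every `hⱼ` and at most `(d - 1) p` otherwise. So the squared normalised sum is at most
`((d - 1)/p)² + 𝟙[p ∣ h]`, and against the weights `∏ r(hⱼ)⁻²` this majorant sums to
`((d - 1)/p)² (3/2)^d + (1 + 1/(2p²))^d`, because `∑_{m ∈ ℤ} r(qm)⁻² = 1 + 1/(2q²)`.
Dropping the `h = 0` term and using `(1 + x)^d - 1 ≤ d x (1 + x)^d` gives the bound.
-/

open Finset Polynomial
open scoped Real

noncomputable def invRkerSq (k : ℤ) : ℝ := 1 / rker k ^ 2

lemma invRkerSq_nonneg (k : ℤ) : 0 ≤ invRkerSq k := by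
  unfold invRkerSq; positivity

lemma invRkerSq_zero : invRkerSq 0 = 1 := by
  simp [invRkerSq, rker]

/-- Lean's `1 / 0 ^ 2 = 0` lets the `k = 0` term be split off as a separate summand. -/
lemma invRkerSq_eq (k : ℤ) :
    invRkerSq k = 3 / (2 * π ^ 2) * (1 / (k : ℝ) ^ 2) + if k = 0 then 1 else 0 := by
  rcases eq_or_ne k 0 with rfl | hk
  · simp [invRkerSq_zero]
  · have hk' : (k : ℝ) ≠ 0 := mod_cast hk
    rw [invRkerSq, rker, if_neg hk, if_neg hk, div_pow, mul_pow, mul_pow, sq_abs,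
      Real.sq_sqrt (by norm_num)]
    field_simp
    ring

lemma hasSum_one_div_int_sq : HasSum (fun n : ℤ => 1 / (n : ℝ) ^ 2) (π ^ 2 / 3) := by
  have h := HasSum.of_nat_of_neg (f := fun n : ℤ => 1 / (n : ℝ) ^ 2)
    (by simpa using hasSum_zeta_two) (by simpa using hasSum_zeta_two)
  rw [show π ^ 2 / 3 = π ^ 2 / 6 + π ^ 2 / 6 - 1 / ((0 : ℤ) : ℝ) ^ 2 by simp; ring]
  exact h

lemma hasSum_invRkerSq_mul {q : ℤ} (hq : q ≠ 0) :
    HasSum (fun m : ℤ => invRkerSq (q * m)) (1 + 1 / (2 * (q : ℝ) ^ 2)) := by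
  have hq' : (q : ℝ) ≠ 0 := mod_cast hq
  have h := (hasSum_one_div_int_sq.mul_left (3 / (2 * π ^ 2 * q ^ 2))).add
    (hasSum_ite_eq (0 : ℤ) (1 : ℝ))
  have hf : (fun m : ℤ => invRkerSq (q * m)) =
      fun m : ℤ => 3 / (2 * π ^ 2 * q ^ 2) * (1 / (m : ℝ) ^ 2) + if m = 0 then 1 else 0 := by
    ext m
    simp only [invRkerSq_eq, mul_eq_zero, hq, false_or]
    push_cast
    field_simp
  rw [hf, show 1 + 1 / (2 * (q : ℝ) ^ 2) = 3 / (2 * π ^ 2 * q ^ 2) * (π ^ 2 / 3) + 1 by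
    field_simp; ring]
  exact h

lemma hasSum_fin_prod {α : Type*} {g : α → ℝ} {s : ℝ} (hg0 : 0 ≤ g) (hg : HasSum g s)
    (d : ℕ) : HasSum (fun k : Fin d → α => ∏ j, g (k j)) (s ^ d) := by
  induction d with
  | zero => simp
  | succ d ih =>
    have hsum := Summable.mul_of_nonneg (f := g) (g := fun k : Fin d → α => ∏ j, g (k j))
      hg.summable ih.summable hg0 fun k => prod_nonneg fun j _ => hg0 (k j)
    rw [pow_succ']
    refine (Fin.consEquiv fun _ => α).hasSum_iff.mp ?_
    have hcons : (fun k : Fin (d + 1) → α => ∏ j, g (k j)) ∘ Fin.consEquiv (fun _ => α) =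
        fun x => g x.1 * ∏ j, g (x.2 j) := by
      ext x
      simp [Fin.consEquiv, Fin.prod_univ_succ]
    rw [hcons]
    exact HasSum.mul (f := g) (g := fun k : Fin d → α => ∏ j, g (k j)) hg ih hsum

lemma hasSum_prod_invRkerSq_of_forall_dvd {q : ℤ} (hq : q ≠ 0) (d : ℕ) :
    HasSum (fun k : Fin d → ℤ => if ∀ j, q ∣ k j then ∏ j, invRkerSq (k j) else 0)
      ((1 + 1 / (2 * (q : ℝ) ^ 2)) ^ d) := by
  have hinj : Function.Injective fun (m : Fin d → ℤ) j => q * m j :=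
    fun m m' h => funext fun j => mul_left_cancel₀ hq (congrFun h j)
  refine (hinj.hasSum_iff ?_).mp ?_
  · rintro k hk
    refine if_neg fun hdvd => hk ⟨fun j => k j / q, funext fun j => ?_⟩
    exact Int.mul_ediv_cancel' (hdvd j)
  · have h := hasSum_fin_prod (g := fun m => invRkerSq (q * m)) (fun _ => invRkerSq_nonneg _)
      (hasSum_invRkerSq_mul hq) d
    convert h using 2 with m
    exact if_pos fun j => dvd_mul_right q (m j)

lemma hasSum_prod_invRkerSq (d : ℕ) :
    HasSum (fun k : Fin d → ℤ => ∏ j, invRkerSq (k j)) ((3 / 2) ^ d) := by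
  convert hasSum_prod_invRkerSq_of_forall_dvd one_ne_zero d using 1
  · simp
  · norm_num

lemma hasSum_prod_invRkerSq_mul_add_indicator {q : ℤ} (hq : q ≠ 0) (d : ℕ) (c : ℝ) :
    HasSum (fun k : Fin d → ℤ =>
      (∏ j, invRkerSq (k j)) * (c + if ∀ j, q ∣ k j then 1 else 0))
      (c * (3 / 2) ^ d + (1 + 1 / (2 * (q : ℝ) ^ 2)) ^ d) := by
  have hfun : (fun k : Fin d → ℤ =>
      (∏ j, invRkerSq (k j)) * (c + if ∀ j, q ∣ k j then 1 else 0)) =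
      fun k => c * ∏ j, invRkerSq (k j) + if ∀ j, q ∣ k j then ∏ j, invRkerSq (k j) else 0 := by
    ext k
    rw [mul_add, mul_ite, mul_one, mul_zero, mul_comm]
  rw [hfun]
  exact ((hasSum_prod_invRkerSq d).mul_left c).add (hasSum_prod_invRkerSq_of_forall_dvd hq d)

noncomputable def expSum {ι : Type*} [Fintype ι] {d : ℕ} (X : ι → Fin d → ℝ) (k : Fin d → ℤ) :
    ℂ :=
  ∑ n, exp (2 * π * I * ∑ j, (k j : ℂ) * (X n j : ℂ))

lemma periodicL2sq_eq_tsum {ι : Type*} [Fintype ι] (d : ℕ) (X : ι → Fin d → ℝ) :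
    periodicL2sq d X = (∑' k : Fin d → ℤ, if k ≠ 0 then
      (∏ j, invRkerSq (k j)) * (‖expSum X k‖ / Fintype.card ι) ^ 2 else 0) / 3 ^ d := by
  rw [periodicL2sq, one_div_mul_eq_div]
  congr 2 with k
  split_ifs
  · rw [norm_mul, norm_div, norm_one, Complex.norm_natCast, one_div_mul_eq_div]
    simp only [invRkerSq, one_div, ← prod_pow, prod_inv_distrib, expSum]
    ring
  · rfl

lemma periodicL2sq_le_of_hasSum {ι : Type*} [Fintype ι] {d : ℕ} {X : ι → Fin d → ℝ}
    {B : (Fin d → ℤ) → ℝ} {s : ℝ}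
    (hB : ∀ k ≠ 0, (‖expSum X k‖ / Fintype.card ι) ^ 2 ≤ B k)
    (hs : HasSum (fun k => (∏ j, invRkerSq (k j)) * B k) s) :
    periodicL2sq d X ≤ (s - B 0) / 3 ^ d := by
  rw [periodicL2sq_eq_tsum]
  gcongr
  have hs0 := hs.update 0 0
  simp only [Pi.zero_apply, invRkerSq_zero, prod_const_one, one_mul, zero_sub,
    neg_add_eq_sub] at hs0
  set T : (Fin d → ℤ) → ℝ := fun k => if k ≠ 0 then
    (∏ j, invRkerSq (k j)) * (‖expSum X k‖ / Fintype.card ι) ^ 2 else 0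
  have hT0 : 0 ≤ T := fun k => by
    simp only [T]
    split_ifs
    · exact mul_nonneg (prod_nonneg fun j _ => invRkerSq_nonneg _) (sq_nonneg _)
    · exact le_rfl
  have hTle : T ≤ Function.update (fun k => (∏ j, invRkerSq (k j)) * B k) 0 0 := fun k => by
    rcases eq_or_ne k 0 with rfl | hk
    · simp [T]
    · simp only [T, if_pos hk, Function.update_of_ne hk]
      exact mul_le_mul_of_nonneg_left (hB k hk) (prod_nonneg fun j _ => invRkerSq_nonneg _)
  exact hasSum_le hTle (hs0.summable.of_nonneg_of_le hT0 hTle).hasSum hs0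

noncomputable def korobovPointSet (p d : ℕ) : Fin p × Fin p → Fin d → ℝ :=
  fun ak j => Int.fract (((ak.1 : ℕ) : ℝ) ^ (j : ℕ) * ((ak.2 : ℕ) : ℝ) / p)

lemma exp_two_pi_I_mul_sum_int_mul_fract {d : ℕ} (k : Fin d → ℤ) (y : Fin d → ℝ) :
    exp (2 * π * I * ∑ j, (k j : ℂ) * ((Int.fract (y j) : ℝ) : ℂ)) =
      exp (2 * π * I * ∑ j, (k j : ℂ) * (y j : ℂ)) := by
  rw [exp_eq_exp_iff_exists_int]
  refine ⟨-∑ j, k j * ⌊y j⌋, ?_⟩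
  simp only [Int.fract, ofReal_sub, ofReal_intCast, mul_sub, sum_sub_distrib]
  push_cast
  ring

lemma sum_fin_eq_sum_zmod {M : Type*} [AddCommMonoid M] (p : ℕ) [NeZero p] (f : ZMod p → M) :
    ∑ a : Fin p, f (a : ℕ) = ∑ x : ZMod p, f x :=
  Fintype.sum_equiv (⟨fun a => (a : ℕ), fun x => ⟨x.val, x.val_lt⟩,
    fun a => Fin.ext (ZMod.val_cast_of_lt a.isLt), ZMod.natCast_zmod_val⟩ : Fin p ≃ ZMod p)
    _ _ fun _ => rfl

lemma eval_ofFn {R : Type*} [CommSemiring R] [DecidableEq R] {n : ℕ} (v : Fin n → R) (a : R) :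
    (ofFn n v).eval a = ∑ j, v j * a ^ (j : ℕ) := by
  simp [ofFn_eq_sum_monomial, eval_finsetSum]

lemma expSum_korobovPointSet (p d : ℕ) [NeZero p] (h : Fin d → ℤ) :
    expSum (korobovPointSet p d) h =
      p * #{a : ZMod p | (ofFn d fun j => (h j : ZMod p)).eval a = 0} := by
  set F := ofFn d fun j => (h j : ZMod p)
  have hterm (a m : Fin p) :
      exp (2 * π * I * ∑ j, (h j : ℂ) * (korobovPointSet p d (a, m) j : ℂ)) =
        ZMod.stdAddChar (((m : ℕ) : ZMod p) * F.eval ((a : ℕ) : ZMod p)) := by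
    have hcast : (((m : ℕ) : ZMod p) * F.eval ((a : ℕ) : ZMod p) : ZMod p) =
        ((∑ j, h j * (a : ℕ) ^ (j : ℕ) * (m : ℕ) : ℤ) : ZMod p) := by
      simp only [F, eval_ofFn, mul_sum]
      push_cast
      exact sum_congr rfl fun j _ => by ring
    simp only [korobovPointSet]
    rw [exp_two_pi_I_mul_sum_int_mul_fract, hcast, ZMod.stdAddChar_coe]
    congr 1
    push_cast
    rw [mul_sum, mul_sum, sum_div]
    exact sum_congr rfl fun j _ => by ring
  calc expSum (korobovPointSet p d) h
      = ∑ a : Fin p, ∑ m : Fin p,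
          ZMod.stdAddChar (((m : ℕ) : ZMod p) * F.eval ((a : ℕ) : ZMod p)) := by
        rw [expSum, Fintype.sum_prod_type]
        exact sum_congr rfl fun a _ => sum_congr rfl fun m _ => hterm a m
    _ = ∑ a : ZMod p, ∑ m : ZMod p, ZMod.stdAddChar (m * F.eval a) := by
        rw [sum_fin_eq_sum_zmod p
          fun x => ∑ m : Fin p, ZMod.stdAddChar (((m : ℕ) : ZMod p) * F.eval x)]
        exact sum_congr rfl fun x _ =>
          sum_fin_eq_sum_zmod p fun m => ZMod.stdAddChar (m * F.eval x)
    _ = ∑ a : ZMod p, if F.eval a = 0 then (p : ℂ) else 0 := by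
        simp only [AddChar.sum_mulShift _ (ZMod.isPrimitive_stdAddChar p), ZMod.card,
          Nat.cast_ite, Nat.cast_zero]
    _ = p * #{a : ZMod p | F.eval a = 0} := by
        rw [sum_ite, sum_const_zero, add_zero, sum_const, nsmul_eq_mul, mul_comm]

lemma card_filter_eval_eq_zero_le_natDegree {R : Type*} [CommRing R] [IsDomain R] [Fintype R]
    [DecidableEq R] {F : R[X]} (hF : F ≠ 0) : #{a | F.eval a = 0} ≤ F.natDegree :=
  card_le_degree_of_subset_roots fun a ha => (mem_roots hF).2 (by simpa using ha)

lemma norm_expSum_korobovPointSet_le (p d : ℕ) [NeZero p] (h : Fin d → ℤ) :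
    ‖expSum (korobovPointSet p d) h‖ ≤ p * p := by
  rw [expSum_korobovPointSet, norm_mul, Complex.norm_natCast, Complex.norm_natCast]
  gcongr
  exact_mod_cast (card_filter_le _ _).trans_eq (ZMod.card p)

lemma norm_expSum_korobovPointSet_le_of_not_forall_dvd {p : ℕ} (hp : p.Prime) (d : ℕ)
    {h : Fin d → ℤ} (hh : ¬ ∀ j, (p : ℤ) ∣ h j) :
    ‖expSum (korobovPointSet p d) h‖ ≤ p * (d - 1 : ℕ) := by
  have : Fact p.Prime := ⟨hp⟩
  obtain ⟨j₀, hj₀⟩ := not_forall.mp hh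
  set F := ofFn d fun j => (h j : ZMod p)
  have hF : F ≠ 0 := by
    rw [Ne, ← map_zero (ofFn d), (injective_ofFn d).eq_iff, funext_iff]
    exact fun hzero => hj₀ ((ZMod.intCast_zmod_eq_zero_iff_dvd _ _).mp (hzero j₀))
  have hdeg : F.natDegree ≤ d - 1 := Nat.le_pred_of_lt (ofFn_natDegree_lt j₀.pos _)
  rw [expSum_korobovPointSet, norm_mul, Complex.norm_natCast, Complex.norm_natCast]
  gcongr
  exact (card_filter_eval_eq_zero_le_natDegree hF).trans hdeg

lemma sq_norm_expSum_korobovPointSet_div_card_le {p : ℕ} (hp : p.Prime) (d : ℕ)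
    (h : Fin d → ℤ) :
    (‖expSum (korobovPointSet p d) h‖ / Fintype.card (Fin p × Fin p)) ^ 2 ≤
      (((d - 1 : ℕ) : ℝ) / p) ^ 2 + if ∀ j, (p : ℤ) ∣ h j then 1 else 0 := by
  have : NeZero p := ⟨hp.ne_zero⟩
  have hp0 : (0 : ℝ) < p := by exact_mod_cast hp.pos
  rw [Fintype.card_prod, Fintype.card_fin, Nat.cast_mul]
  split_ifs with hh
  · have h1 : ‖expSum (korobovPointSet p d) h‖ / (p * p) ≤ 1 :=
      (div_le_one (by positivity)).2 (norm_expSum_korobovPointSet_le p d h)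
    have h0 : 0 ≤ ‖expSum (korobovPointSet p d) h‖ / (p * p) := by positivity
    nlinarith [sq_nonneg (((d - 1 : ℕ) : ℝ) / p)]
  · rw [add_zero]
    refine pow_le_pow_left₀ (by positivity) ?_ 2
    rw [div_le_div_iff₀ (by positivity) hp0]
    calc ‖expSum (korobovPointSet p d) h‖ * p ≤ p * (d - 1 : ℕ) * p := by
          gcongr
          exact norm_expSum_korobovPointSet_le_of_not_forall_dvd hp d hh
      _ = (d - 1 : ℕ) * (p * p) := by ring

lemma one_add_pow_sub_one_le {x : ℝ} (hx : 0 ≤ x) (n : ℕ) :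
    (1 + x) ^ n - 1 ≤ n * x * (1 + x) ^ n := by
  have h := abs_pow_sub_pow_le (1 + x) 1 n
  rw [one_pow, add_sub_cancel_left, abs_of_nonneg hx,
    abs_of_nonneg (show (0 : ℝ) ≤ 1 + x by linarith), abs_one,
    max_eq_left (show (1 : ℝ) ≤ 1 + x by linarith)] at h
  calc (1 + x) ^ n - 1 ≤ x * n * (1 + x) ^ (n - 1) := (le_abs_self _).trans h
    _ ≤ x * n * (1 + x) ^ n := by
        gcongr
        exacts [by linarith, Nat.sub_le n 1]
    _ = n * x * (1 + x) ^ n := by ring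

lemma korobov_majorant_sum_le (p d : ℕ) (hp : p ≠ 0) :
    ((((d - 1 : ℕ) : ℝ) / p) ^ 2 * (3 / 2) ^ d + (1 + 1 / (2 * (p : ℝ) ^ 2)) ^ d -
      ((((d - 1 : ℕ) : ℝ) / p) ^ 2 + 1)) / 3 ^ d ≤ (d : ℝ) ^ 2 / (2 ^ d * p ^ 2) := by
  have hp1 : (1 : ℝ) ≤ p := by exact_mod_cast Nat.one_le_iff_ne_zero.2 hp
  set x : ℝ := 1 / (2 * (p : ℝ) ^ 2)
  have hx0 : 0 ≤ x := by positivity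
  have hx : 1 + x ≤ 3 / 2 := by
    have : x ≤ 1 / 2 := by
      simp only [x]
      gcongr
      nlinarith
    linarith
  have hpow : (1 + x) ^ d - 1 ≤ d * x * (3 / 2) ^ d :=
    (one_add_pow_sub_one_le hx0 d).trans (by gcongr)
  have hcoef : ((d - 1 : ℕ) : ℝ) ^ 2 + d / 2 ≤ d ^ 2 := by
    rcases d with _ | d
    · simp
    · push_cast [Nat.add_sub_cancel]
      nlinarith [(Nat.cast_nonneg d : (0 : ℝ) ≤ d)]
  calc _ ≤ ((((d - 1 : ℕ) : ℝ) / p) ^ 2 * (3 / 2) ^ d + d * x * (3 / 2) ^ d) / 3 ^ d := by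
        gcongr
        nlinarith [sq_nonneg (((d - 1 : ℕ) : ℝ) / p)]
    _ = (((d - 1 : ℕ) : ℝ) ^ 2 + d / 2) / (2 ^ d * p ^ 2) := by
        simp only [x, div_pow]
        field_simp
    _ ≤ (d : ℝ) ^ 2 / (2 ^ d * p ^ 2) := by gcongr

theorem periodicL2sq_korobov_R_general (p : ℕ) (hp : p.Prime) (d : ℕ) :
    periodicL2sq d (fun (ak : Fin p × Fin p) (j : Fin d) =>
        Int.fract (((ak.1 : ℕ) : ℝ)^((j:ℕ)) * ((ak.2 : ℕ) : ℝ) / p))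
      ≤ (d:ℝ)^2 / (2^d * p^2) := by
  have hs := hasSum_prod_invRkerSq_mul_add_indicator (q := p) (by exact_mod_cast hp.ne_zero) d
    ((((d - 1 : ℕ) : ℝ) / p) ^ 2)
  rw [Int.cast_natCast] at hs
  refine (periodicL2sq_le_of_hasSum
    (fun k _ => sq_norm_expSum_korobovPointSet_div_card_le hp d k) hs).trans ?_
  simpa using korobov_majorant_sum_le p d hp.ne_zero

/-- The squared periodic `L₂`-discrepancy of the Hua–Wang point set
`R_{p²}^Kor = {({k/p},{ak/p},…,{a^{d-1}k/p}) : 0 ≤ a,k < p}` (a multiset of `p²` points)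
is at most `d²/(2^d p²)`. -/
theorem periodicL2sq_korobov_R (p : ℕ) (hp : p.Prime) (d : ℕ) (hd : 1 ≤ d) :
    periodicL2sq d (fun (ak : Fin p × Fin p) (j : Fin d) =>
        Int.fract (((ak.1 : ℕ) : ℝ)^((j:ℕ)) * ((ak.2 : ℕ) : ℝ) / p))
      ≤ (d:ℝ)^2 / (2^d * p^2) :=
  periodicL2sq_korobov_R_general p hp d
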